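/- The hyperplane δ: x₁₂+x₂₃+x₃₁ = x₁₃+x₃₂+x₂₁ divides P₁ into two congruent parts: the linear involution I_ψ induced by the coordinate permutation ψ = (x₁₂ x₁₃)(x₃₁ x₂₁)(x₃₂ x₂₃) maps P₁¹ = P₁ ∩ {x₁₂+x₂₃+x₃₁ ≥ x₁₃+x₃₂+x₂₁} onto P₁² = P₁ ∩ {x₁₂+x₂₃+x₃₁ ≤ x₁₃+x₃₂+x₂₁}; in particular Vol(P₁¹) = Vol(P₁²). -/

import Mathlib

open MeasureTheory

/-- The polytope `P ⊂ ℝ⁶` in coordinates `(x₁₂, x₂₃, x₃₁, x₁₃, x₃₂, x₂₁)`,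
indexed as `(x 0, x 1, x 2, x 3, x 4, x 5)`. -/
def polyP : Set (EuclideanSpace ℝ (Fin 6)) :=
  {x | x 0 + x 3 + 2 * (x 5 + x 2) ≤ 1 ∧
       x 5 + x 1 + 2 * (x 0 + x 4) ≤ 1 ∧
       x 2 + x 4 + 2 * (x 3 + x 1) ≤ 1 ∧
       ∀ i, 0 ≤ x i}

/-- The hyperplane `α₁ : x₁₂+x₁₃+2(x₂₁+x₃₁) = 1`. -/
def alpha1 : Set (EuclideanSpace ℝ (Fin 6)) :=
  {x | x 0 + x 3 + 2 * (x 5 + x 2) = 1}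

/-- `P₁ = conv({O} ∪ (P ∩ α₁))`. -/
noncomputable def P1 : Set (EuclideanSpace ℝ (Fin 6)) :=
  convexHull ℝ ({0} ∪ (polyP ∩ alpha1))

/-- The map `I_ψ` induced by the coordinate permutation
`ψ = (x₁₂ x₁₃)(x₃₁ x₂₁)(x₃₂ x₂₃)`, swapping `x₁₂ ↔ x₁₃`, `x₃₁ ↔ x₂₁`,
`x₃₂ ↔ x₂₃`. -/
def Ipsi (x : EuclideanSpace ℝ (Fin 6)) : EuclideanSpace ℝ (Fin 6) :=
  WithLp.toLp 2 ![x 3, x 4, x 5, x 0, x 1, x 2]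

/-- `P₁¹ = P₁ ∩ {x₁₂+x₂₃+x₃₁ ≥ x₁₃+x₃₂+x₂₁}`. -/
noncomputable def P11 : Set (EuclideanSpace ℝ (Fin 6)) :=
  P1 ∩ {x | x 3 + x 4 + x 5 ≤ x 0 + x 1 + x 2}

/-- `P₁² = P₁ ∩ {x₁₂+x₂₃+x₃₁ ≤ x₁₃+x₃₂+x₂₁}`. -/
noncomputable def P12 : Set (EuclideanSpace ℝ (Fin 6)) :=
  P1 ∩ {x | x 0 + x 1 + x 2 ≤ x 3 + x 4 + x 5}

/-!
`I_ψ` is the coordinate shift `i ↦ i + 3` of `Fin 6`, a linear isometric involution of `ℝ⁶`.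
It fixes the first defining inequality of `P` and swaps the other two, and it fixes `α₁` and
`O`, so it preserves `P₁`. It exchanges the two sides of `δ`, so it maps `P₁¹` onto `P₁²`, and
being an isometry it preserves volume.
-/

open Set

theorem LinearIsometryEquiv.volume_image {E F : Type*}
    [NormedAddCommGroup E] [InnerProductSpace ℝ E] [FiniteDimensional ℝ E]
    [MeasurableSpace E] [BorelSpace E]
    [NormedAddCommGroup F] [InnerProductSpace ℝ F] [FiniteDimensional ℝ F]
    [MeasurableSpace F] [BorelSpace F]
    (f : E ≃ₗᵢ[ℝ] F) (s : Set E) : volume (f '' s) = volume s := by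
  rw [f.image_eq_preimage_symm]
  exact f.symm.measurePreserving.measure_preimage_equiv (f := f.symm.toMeasurableEquiv) s

noncomputable def ipsiEquiv : EuclideanSpace ℝ (Fin 6) ≃ₗᵢ[ℝ] EuclideanSpace ℝ (Fin 6) :=
  LinearIsometryEquiv.piLpCongrLeft 2 ℝ ℝ (Equiv.addRight 3)

lemma coe_ipsiEquiv : ⇑ipsiEquiv = Ipsi := by
  ext x i
  fin_cases i <;> rfl

lemma isLinearMap_Ipsi : IsLinearMap ℝ Ipsi :=
  coe_ipsiEquiv ▸ ipsiEquiv.toLinearEquiv.toLinearMap.isLinear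

lemma Ipsi_apply (x : EuclideanSpace ℝ (Fin 6)) (i : Fin 6) : Ipsi x i = x (i + 3) := by
  fin_cases i <;> rfl

lemma Ipsi_involutive : Function.Involutive Ipsi := fun x => by
  ext i
  fin_cases i <;> rfl

lemma preimage_Ipsi_polyP : Ipsi ⁻¹' polyP = polyP := by
  ext x
  have hnonneg : (∀ i, 0 ≤ x (i + 3)) ↔ ∀ i, 0 ≤ x i :=
    (Equiv.addRight 3).forall_congr_right (q := fun i => 0 ≤ x i)
  simp only [polyP, mem_preimage, mem_ofPred_eq, Ipsi_apply, Fin.reduceAdd, hnonneg]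
  constructor <;> rintro ⟨h₁, h₂, h₃, h⟩ <;> exact ⟨by linarith, h₃, h₂, h⟩

lemma preimage_Ipsi_alpha1 : Ipsi ⁻¹' alpha1 = alpha1 := by
  ext x
  show x 3 + x 0 + 2 * (x 2 + x 5) = 1 ↔ x 0 + x 3 + 2 * (x 5 + x 2) = 1
  rw [add_comm (x 3), add_comm (x 2)]

lemma image_Ipsi_P1 : Ipsi '' P1 = P1 := by
  rw [P1, isLinearMap_Ipsi.image_convexHull, image_union, image_singleton,
    isLinearMap_Ipsi.map_zero, image_inter Ipsi_involutive.injective,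
    Ipsi_involutive.image_eq_preimage_symm, preimage_Ipsi_polyP, preimage_Ipsi_alpha1]

/-- The hyperplane `δ` divides `P₁` into two congruent parts:
`I_ψ` maps `P₁¹` onto `P₁²`, whence `Vol(P₁¹) = Vol(P₁²)`. -/
theorem Ipsi_swaps_halves :
    Ipsi '' P11 = P12 ∧ volume P11 = volume P12 := by
  have himage : Ipsi '' P11 = P12 := by
    rw [P11, P12, image_inter Ipsi_involutive.injective, image_Ipsi_P1,
      Ipsi_involutive.image_eq_preimage_symm]
    rfl
  refine ⟨himage, ?_⟩
  rw [← himage, ← coe_ipsiEquiv, ipsiEquiv.volume_image]
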